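/- arXiv:1508.00520 — 3 statements merged into one kernel-verified Lean document; each statement's English description precedes it below -/
import Mathlib

section
/- Let θ be irrational with partial quotients (a_k) and convergent denominators (q_k). If a_{k+1} = 1 then q_{k+1}(‖q_{k-1}θ‖ + ‖q_k θ‖) < 2. -/
open Filter

/-- distance from `x` to the nearest integer -/
noncomputable def nint (x : ℝ) : ℝ := ⨅ m : ℤ, |x - (m : ℝ)|

/-- denominators of the continued fraction convergents of `θ` (`qd θ 0 = 1`) -/
noncomputable def qd (θ : ℝ) (n : ℕ) : ℝ := (GenContFract.of θ).dens n

/-- the `(n+1)`-st partial quotient `a_{n+1}` of `θ` is `partQuot θ n` -/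
noncomputable def partQuot (θ : ℝ) (n : ℕ) : Option ℝ := (GenContFract.of θ).partDens.get? n

/-- irrationality exponent `w(θ) = sup{ s > 0 : liminf_j j^s ‖jθ‖ = 0 }`, as an extended real -/
noncomputable def irrExp (θ : ℝ) : EReal :=
  sSup {w : EReal | ∃ s : ℝ, w = (s : EReal) ∧ 0 < s ∧
    Filter.atTop.liminf (fun j : ℕ => (j : ℝ) ^ s * nint (j * θ)) = 0}

/-- `G_n = ⋃_{i=1}^n B(iθ, n^{-τ})` in the circle `T = ℝ/ℤ` -/
noncomputable def Gset (θ τ : ℝ) (n : ℕ) : Set (AddCircle (1 : ℝ)) :=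
  ⋃ i ∈ Finset.Icc 1 n, Metric.ball (((i : ℝ) * θ : ℝ) : AddCircle (1 : ℝ)) ((n : ℝ) ^ (-τ))

/-- `F_k = ⋂_{n=q_k+1}^{q_{k+1}} G_n` -/
noncomputable def Fset (θ τ : ℝ) (k : ℕ) : Set (AddCircle (1 : ℝ)) :=
  ⋂ n ∈ {n : ℕ | qd θ k < (n : ℝ) ∧ (n : ℝ) ≤ qd θ (k + 1)}, Gset θ τ n

/-- the Dirichlet uniform approximation set `U_τ[θ] ⊆ T` -/
noncomputable def Uset (θ τ : ℝ) : Set (AddCircle (1 : ℝ)) :=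
  {y | ∀ᶠ Q : ℕ in atTop, ∃ n : ℕ, 1 ≤ n ∧ n ≤ Q ∧
    dist (((n : ℝ) * θ : ℝ) : AddCircle (1 : ℝ)) y < (Q : ℝ) ^ (-τ)}

/-!
Let `p_n / q_n` be the convergents of `θ` and `E_n = (-1)^n (q_n θ - p_n)`; the alternating sign
makes `E_n = |q_n θ - p_n| > 0`, so `‖q_n θ‖ ≤ E_n`. The determinant formula gives
`q_{n+1} E_n + q_n E_{n+1} = 1`, and `a_{k+1} = 1` gives `q_{k+1} = q_k + q_{k-1}` and
`E_{k-1} = E_k + E_{k+1}`. Hence `q_{k+1} (E_{k-1} + E_k) = 2 - (q_k - q_{k-1}) E_{k+1} < 2` when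
`q_{k-1} < q_k`; when `q_{k-1} = q_k` both distances are `‖q_k θ‖ ≤ E_k` and
`2 q_{k+1} E_k = 2 - 2 q_k E_{k+1} < 2`.
-/

namespace GenContFract

open GenContFract (of)

variable {K : Type*} [Field K] [LinearOrder K] [FloorRing K] {v : K} {n : ℕ}

theorem exists_int_eq_contsAux_a (v : K) (n : ℕ) : ∃ z : ℤ, ((of v).contsAux n).a = z := by
  induction n using Nat.twoStepInduction with
  | zero => exact ⟨1, by simp⟩
  | one => exact ⟨⌊v⌋, by simp [of_h_eq_floor]⟩
  | more n ih ih1 =>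
    rcases hs : (of v).s.get? n with _ | gp
    · rwa [contsAux_stable_step_of_terminated hs]
    · obtain ⟨z₀, h₀⟩ := ih
      obtain ⟨z₁, h₁⟩ := ih1
      obtain ⟨hgpa, z, hgpb⟩ := of_partNum_eq_one_and_exists_int_partDen_eq hs
      exact ⟨z * z₁ + z₀, by rw [contsAux_recurrence hs rfl rfl]; simp [hgpa, hgpb, h₀, h₁]⟩

theorem exists_int_eq_nums (v : K) (n : ℕ) : ∃ z : ℤ, (of v).nums n = z :=
  exists_int_eq_contsAux_a v (n + 1)

theorem dens_add_two_of_partDen {b : K} (hb : (of v).partDens.get? (n + 1) = some b) :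
    (of v).dens (n + 2) = b * (of v).dens (n + 1) + (of v).dens n := by
  obtain ⟨gp, hgp, rfl⟩ := exists_s_b_of_partDen hb
  rw [dens_recurrence hgp rfl rfl, (of_partNum_eq_one_and_exists_int_partDen_eq hgp).1, one_mul]

theorem nums_add_two_of_partDen {b : K} (hb : (of v).partDens.get? (n + 1) = some b) :
    (of v).nums (n + 2) = b * (of v).nums (n + 1) + (of v).nums n := by
  obtain ⟨gp, hgp, rfl⟩ := exists_s_b_of_partDen hb
  rw [nums_recurrence hgp rfl rfl, (of_partNum_eq_one_and_exists_int_partDen_eq hgp).1, one_mul]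

/-- `q_n v - p_n` has sign `(-1)^n`, so this is `|q_n v - p_n|` (`abs_dens_mul_sub_nums`). -/
def convErr (v : K) (n : ℕ) : K := (-1) ^ n * ((of v).dens n * v - (of v).nums n)

theorem convErr_eq_of_partDen {b : K} (hb : (of v).partDens.get? (n + 1) = some b) :
    convErr v n = b * convErr v (n + 1) + convErr v (n + 2) := by
  rw [convErr, convErr, convErr, dens_add_two_of_partDen hb, nums_add_two_of_partDen hb]
  ring

variable [IsStrictOrderedRing K]

theorem one_le_dens (v : K) (n : ℕ) : 1 ≤ (of v).dens n := by
  simpa using monotone_nat_of_le_succ (fun n ↦ of_den_mono (v := v) (n := n)) (Nat.zero_le n)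

theorem convErr_pos (h : ¬(of v).TerminatedAt n) : 0 < convErr v n := by
  obtain ⟨_, hstream⟩ := Option.ne_none_iff_exists'.mp
    (mt of_terminatedAt_n_iff_succ_nth_intFractPair_stream_eq_none.mpr h)
  obtain ⟨ifp, hst, hfr, -⟩ := IntFractPair.succ_nth_stream_eq_some_iff.mp hstream
  have hsub := sub_convs_eq hst
  simp only [hfr, if_false, ← nth_cont_eq_succ_nth_contAux, ← den_eq_conts_b] at hsub
  have hB : 0 < (of v).dens n := one_pos.trans_le (one_le_dens v n)
  have hfr : 0 < ifp.fr := (IntFractPair.nth_stream_fr_nonneg hst).lt_of_ne' hfr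
  have hpB : 0 ≤ ((of v).contsAux n).b := zero_le_of_contsAux_b
  have : convErr v n = (ifp.fr⁻¹ * (of v).dens n + ((of v).contsAux n).b)⁻¹ := by
    have : (of v).dens n * v - (of v).nums n = (of v).dens n * (v - (of v).convs n) := by
      rw [conv_eq_num_div_den]; field_simp
    rw [convErr, this, hsub]
    field_simp
    rw [← pow_mul, mul_comm, pow_mul]
    norm_num
  rw [this]; positivity

theorem abs_dens_mul_sub_nums (h : ¬(of v).TerminatedAt n) :
    |(of v).dens n * v - (of v).nums n| = convErr v n := by
  rw [← abs_of_pos (convErr_pos h), convErr, abs_mul, abs_pow, abs_neg, abs_one, one_pow, one_mul]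

theorem dens_succ_mul_convErr_add_dens_mul_convErr_succ (h : ¬(of v).TerminatedAt n) :
    (of v).dens (n + 1) * convErr v n + (of v).dens n * convErr v (n + 1) = 1 := by
  have hdet : (of v).nums n * (of v).dens (n + 1) - (of v).dens n * (of v).nums (n + 1) =
      (-1) ^ (n + 1) :=
    SimpContFract.determinant (s := SimpContFract.of v) h
  have hsq : ((-1 : K) ^ n) ^ 2 = 1 := by rw [← pow_mul, mul_comm, pow_mul]; norm_num
  rw [convErr, convErr]
  linear_combination (-(-1 : K) ^ n) * hdet + hsq

end GenContFract

open GenContFract (of)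

theorem Irrational.not_terminatedAt_of {θ : ℝ} (hθ : Irrational θ) (n : ℕ) :
    ¬(of θ).TerminatedAt n := fun h ↦ by
  obtain ⟨q, hq⟩ := (GenContFract.terminates_iff_rat θ).mp ⟨n, h⟩
  exact hθ ⟨q, hq.symm⟩

theorem nint_le_abs_sub_intCast (x : ℝ) (m : ℤ) : nint x ≤ |x - m| :=
  ciInf_le ⟨0, by rintro _ ⟨i, rfl⟩; exact abs_nonneg _⟩ m

theorem nint_dens_mul_le_convErr {θ : ℝ} {n : ℕ} (h : ¬(of θ).TerminatedAt n) :
    nint ((of θ).dens n * θ) ≤ GenContFract.convErr θ n := by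
  obtain ⟨z, hz⟩ := GenContFract.exists_int_eq_nums θ n
  rw [← GenContFract.abs_dens_mul_sub_nums h, hz]
  exact nint_le_abs_sub_intCast _ z

open GenContFract in
theorem stmt_6 (θ : ℝ) (hθ : Irrational θ) (k : ℕ) (hk : 1 ≤ k)
    (ha : partQuot θ k = some 1) :
    qd θ (k + 1) * (nint (qd θ (k - 1) * θ) + nint (qd θ k * θ)) < 2 := by
  obtain ⟨j, rfl⟩ := Nat.exists_eq_add_of_le' hk
  replace ha : (of θ).partDens.get? (j + 1) = some 1 := ha
  have hq := dens_add_two_of_partDen ha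
  have hE := convErr_eq_of_partDen ha
  have hdet : (of θ).dens (j + 2) * convErr θ (j + 1) + (of θ).dens (j + 1) * convErr θ (j + 2) = 1 :=
    dens_succ_mul_convErr_add_dens_mul_convErr_succ (hθ.not_terminatedAt_of (j + 1))
  have hE₂ := convErr_pos (hθ.not_terminatedAt_of (j + 2))
  have hn₀ := nint_dens_mul_le_convErr (hθ.not_terminatedAt_of j)
  have hn₁ := nint_dens_mul_le_convErr (hθ.not_terminatedAt_of (j + 1))
  have hq₁ := one_le_dens θ (j + 1)
  have hq₂ := zero_le_of_den (v := θ) (n := j + 2)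
  have hmono := of_den_mono (v := θ) (n := j)
  show (of θ).dens (j + 2) * (nint ((of θ).dens j * θ) + nint ((of θ).dens (j + 1) * θ)) < 2
  set q := (of θ).dens
  set E := convErr θ
  rcases hmono.lt_or_eq with hlt | heq
  · calc q (j + 2) * (nint (q j * θ) + nint (q (j + 1) * θ))
        ≤ q (j + 2) * (E j + E (j + 1)) := by gcongr
      _ = 2 - (q (j + 1) - q j) * E (j + 2) := by
        linear_combination 2 * hdet + q (j + 2) * hE + E (j + 2) * hq
      _ < 2 := by linarith [mul_pos (sub_pos.2 hlt) hE₂]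
  · calc q (j + 2) * (nint (q j * θ) + nint (q (j + 1) * θ))
        ≤ q (j + 2) * (E (j + 1) + E (j + 1)) := by rw [heq]; gcongr
      _ = 2 - 2 * q (j + 1) * E (j + 2) := by linear_combination 2 * hdet
      _ < 2 := by linarith [mul_pos (one_pos.trans_le hq₁) hE₂]
end

section
/- Let θ be irrational with convergent denominators (q_k), let τ = 1, and let F_k = ∩_{n=q_k+1}^{q_{k+1}} ∪_{i=1}^n B(iθ, 1/n) in the circle T. If a_{k+1} = 1 then F_k = T. -/
open Filter

namespace Stmt7Aux

open GenContFract

variable {θ : ℝ}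

lemma notTerm (hθ : Irrational θ) (n : ℕ) : ¬(GenContFract.of θ).TerminatedAt n := by
  intro h
  obtain ⟨q, hq⟩ := (GenContFract.terminates_iff_rat θ).mp ⟨n, h⟩
  exact hθ ⟨q, hq.symm⟩

lemma s_some (hθ : Irrational θ) (n : ℕ) : ∃ gp, (GenContFract.of θ).s.get? n = some gp :=
  Option.ne_none_iff_exists'.1 (notTerm hθ n)

lemma one_le_dens (n : ℕ) : (1:ℝ) ≤ (GenContFract.of θ).dens n := by
  induction n with
  | zero => simp [GenContFract.zeroth_den_eq_one]
  | succ n ih => exact ih.trans (GenContFract.of_den_mono (v := θ) (n := n))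

lemma stream_some (hθ : Irrational θ) (n : ℕ) :
    ∃ ifp, IntFractPair.stream θ n = some ifp ∧ ifp.fr ≠ 0 := by
  have h1 : ¬(GenContFract.of θ).TerminatedAt n := notTerm hθ n
  rw [of_terminatedAt_n_iff_succ_nth_intFractPair_stream_eq_none] at h1
  obtain ⟨ifps, hifps⟩ := Option.ne_none_iff_exists'.1 h1
  obtain ⟨p, hp, hfr, _⟩ := IntFractPair.succ_nth_stream_eq_some_iff.mp hifps
  exact ⟨p, hp, hfr⟩

/-- `η n = (-1)^n (q_n θ - p_n)` -/
noncomputable def eta (θ : ℝ) (n : ℕ) : ℝ :=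
  (-1)^n * ((GenContFract.of θ).dens n * θ - (GenContFract.of θ).nums n)

lemma eta_pos (hθ : Irrational θ) (n : ℕ) : 0 < eta θ n := by
  obtain ⟨ifp, hst, hfr⟩ := stream_some hθ n
  have hsub := sub_convs_eq hst
  simp only [if_neg hfr] at hsub
  set B := ((GenContFract.of θ).contsAux (n+1)).b with hB
  set pB := ((GenContFract.of θ).contsAux n).b with hpB
  have hBd : (GenContFract.of θ).dens n = B := by
    rw [GenContFract.den_eq_conts_b, GenContFract.nth_cont_eq_succ_nth_contAux]
  have hB1 : (1:ℝ) ≤ B := hBd ▸ one_le_dens n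
  have hpB0 : 0 ≤ pB := zero_le_of_contsAux_b
  have hfr0 : 0 < ifp.fr := lt_of_le_of_ne (IntFractPair.nth_stream_fr_nonneg hst) (Ne.symm hfr)
  have hconv : (GenContFract.of θ).convs n
      = (GenContFract.of θ).nums n / (GenContFract.of θ).dens n :=
    GenContFract.conv_eq_num_div_den
  have hden : 0 < ifp.fr⁻¹ * B + pB := by positivity
  have hBpos : (0:ℝ) < B := lt_of_lt_of_le one_pos hB1
  have hdelta : (GenContFract.of θ).dens n * θ - (GenContFract.of θ).nums n
      = B * (θ - (GenContFract.of θ).convs n) := by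
    rw [hconv, hBd]
    field_simp
  rw [eta, hdelta, hsub]
  have h1 : B * ((-1)^n / (B * (ifp.fr⁻¹ * B + pB))) = (-1)^n / (ifp.fr⁻¹ * B + pB) := by
    field_simp
  rw [h1]
  have h2 : (-1:ℝ)^n * ((-1)^n / (ifp.fr⁻¹ * B + pB)) = 1 / (ifp.fr⁻¹ * B + pB) := by
    rw [mul_div_assoc']
    congr 1
    · rw [← mul_pow]; norm_num
  rw [h2]
  positivity

lemma det_eq (hθ : Irrational θ) (n : ℕ) :
    (GenContFract.of θ).nums n * (GenContFract.of θ).dens (n+1)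
      - (GenContFract.of θ).dens n * (GenContFract.of θ).nums (n+1) = (-1)^(n+1) :=
  SimpContFract.determinant (s := SimpContFract.of θ) (notTerm hθ n)

lemma identity (hθ : Irrational θ) (n : ℕ) :
    (GenContFract.of θ).dens (n+1) * eta θ n + (GenContFract.of θ).dens n * eta θ (n+1) = 1 := by
  have hdet := det_eq hθ n
  have he : ((-1:ℝ)^n) * ((-1:ℝ)^n) = 1 := by rw [← mul_pow]; norm_num
  simp only [eta, pow_succ] at *
  linear_combination (-(-1:ℝ)^n) * hdet + he

/-- integrality of continuants -/
lemma conts_int (hθ : Irrational θ) (n : ℕ) :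
    (∃ z : ℤ, ((GenContFract.of θ).contsAux n).a = z) ∧
      (∃ m : ℕ, ((GenContFract.of θ).contsAux n).b = m) := by
  induction n using Nat.twoStepInduction with
  | zero =>
    rw [GenContFract.zeroth_contAux_eq_one_zero]
    exact ⟨⟨1, by norm_num⟩, ⟨0, by norm_num⟩⟩
  | one =>
    rw [GenContFract.first_contAux_eq_h_one, GenContFract.of_h_eq_floor]
    exact ⟨⟨⌊θ⌋, rfl⟩, ⟨1, by norm_num⟩⟩
  | more n ih ih1 =>
    obtain ⟨gp, hgp⟩ := s_some hθ n
    have ha1 : gp.a = 1 := of_partNum_eq_one (partNum_eq_s_a hgp)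
    obtain ⟨z, hz⟩ := exists_int_eq_of_partDen (partDen_eq_s_b hgp)
    have hz1 : (1:ℝ) ≤ (z:ℝ) := by rw [← hz]; exact of_one_le_get?_partDen (partDen_eq_s_b hgp)
    have hzn : 0 ≤ z := by exact_mod_cast le_trans zero_le_one hz1
    have hrec := contsAux_recurrence (g := GenContFract.of θ) hgp rfl rfl
    obtain ⟨⟨za, hza⟩, ⟨mb, hmb⟩⟩ := ih
    obtain ⟨⟨za', hza'⟩, ⟨mb', hmb'⟩⟩ := ih1
    rw [hrec]
    constructor
    · exact ⟨z * za' + za, by push_cast [hza, hza', ha1, hz]; ring⟩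
    · refine ⟨z.toNat * mb' + mb, ?_⟩
      have hzt : ((z.toNat : ℕ) : ℝ) = (z : ℝ) := by exact_mod_cast Int.toNat_of_nonneg hzn
      push_cast [hmb, hmb', ha1, hz, hzt]
      ring

lemma dens_nat (hθ : Irrational θ) (n : ℕ) :
    ∃ m : ℕ, 1 ≤ m ∧ (GenContFract.of θ).dens n = m := by
  obtain ⟨-, m, hm⟩ := conts_int hθ (n+1)
  have hm' : (GenContFract.of θ).dens n = m := by
    rw [GenContFract.den_eq_conts_b, GenContFract.nth_cont_eq_succ_nth_contAux]; exact hm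
  refine ⟨m, ?_, hm'⟩
  have h1 := one_le_dens (θ := θ) n
  rw [hm'] at h1
  exact_mod_cast h1

lemma nums_int (hθ : Irrational θ) (n : ℕ) :
    ∃ z : ℤ, (GenContFract.of θ).nums n = z := by
  obtain ⟨⟨z, hz⟩, -⟩ := conts_int hθ (n+1)
  rw [GenContFract.num_eq_conts_a, GenContFract.nth_cont_eq_succ_nth_contAux]
  exact ⟨z, hz⟩

lemma rec_of_pq_one {m : ℕ} (ha : (GenContFract.of θ).partDens.get? (m+1) = some 1) :
    (GenContFract.of θ).dens (m+2) = (GenContFract.of θ).dens (m+1) + (GenContFract.of θ).dens m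
    ∧ (GenContFract.of θ).nums (m+2) = (GenContFract.of θ).nums (m+1) + (GenContFract.of θ).nums m
    ∧ eta θ m = eta θ (m+1) + eta θ (m+2) := by
  obtain ⟨gp, hgp, hb1⟩ := exists_s_b_of_partDen ha
  have ha1 : gp.a = 1 := of_partNum_eq_one (partNum_eq_s_a hgp)
  have hd := dens_recurrence (g := GenContFract.of θ) hgp rfl rfl
  have hn := nums_recurrence (g := GenContFract.of θ) hgp rfl rfl
  have hd' : (GenContFract.of θ).dens (m+2)
      = (GenContFract.of θ).dens (m+1) + (GenContFract.of θ).dens m := by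
    rw [hd, hb1, ha1]; ring
  have hn' : (GenContFract.of θ).nums (m+2)
      = (GenContFract.of θ).nums (m+1) + (GenContFract.of θ).nums m := by
    rw [hn, hb1, ha1]; ring
  refine ⟨hd', hn', ?_⟩
  simp only [eta, hd', hn']
  simp only [pow_succ]
  ring

lemma coe_neg_circ (a : ℝ) : ((-a : ℝ) : AddCircle (1:ℝ)) = -((a:ℝ) : AddCircle (1:ℝ)) := by
  exact QuotientAddGroup.mk_neg _ a

lemma dist_coe_le (a b : ℝ) (m : ℤ) :
    dist ((a : ℝ) : AddCircle (1:ℝ)) ((b : ℝ) : AddCircle (1:ℝ)) ≤ |a - b - m| := by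
  rw [dist_eq_norm]
  have h1 : ((a : AddCircle (1:ℝ)) - (b : AddCircle (1:ℝ))) = ((a - b : ℝ) : AddCircle (1:ℝ)) :=
    (QuotientAddGroup.mk_sub _ a b).symm
  rw [h1, AddCircle.norm_eq]
  simp only [inv_one, one_mul, mul_one]
  exact round_le (a - b) m

lemma cover (S : Finset ℕ) (hS : S.Nonempty) (f : ℕ → ℝ) (Lmax : ℝ)
    (hstep : ∀ i ∈ S, ∃ j ∈ S, ∃ L : ℝ, 0 < L ∧ L ≤ Lmax ∧ ∃ m : ℤ, f j = f i + L + m)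
    (y : AddCircle (1:ℝ)) :
    ∃ i ∈ S, dist ((f i : ℝ) : AddCircle (1:ℝ)) y ≤ Lmax / 2 := by
  obtain ⟨Y, rfl⟩ := QuotientAddGroup.mk_surjective y
  set g : ℕ → ℝ := fun i => Int.fract (Y - f i) with hg
  obtain ⟨i₀, hi₀S, hmin⟩ := S.exists_min_image g hS
  obtain ⟨j, hjS, L, hL0, hLm, m, hm⟩ := hstep i₀ hi₀S
  have hgj : g j = Int.fract (g i₀ - L) := by
    have h5 : Y - f j = (g i₀ - L) + ((⌊Y - f i₀⌋ - m : ℤ) : ℝ) := by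
      rw [hm]
      simp only [hg, Int.fract]
      push_cast
      ring
    simp only [hg]
    rw [h5, Int.fract_add_intCast]
  have hg0 : 0 ≤ g i₀ := Int.fract_nonneg _
  have hg1 : g i₀ < 1 := Int.fract_lt_one _
  by_cases hc : L ≤ g i₀
  · exfalso
    have h6 : g j = g i₀ - L := by
      rw [hgj]
      exact Int.fract_eq_self.mpr ⟨by linarith, by linarith⟩
    have := hmin j hjS
    linarith
  · push_neg at hc
    by_cases hc2 : g i₀ ≤ L / 2
    · refine ⟨i₀, hi₀S, ?_⟩
      have h3 := dist_coe_le (f i₀) Y (-⌊Y - f i₀⌋)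
      have h4 : f i₀ - Y - ((-⌊Y - f i₀⌋ : ℤ) : ℝ) = -(g i₀) := by
        simp only [hg, Int.fract]
        push_cast
        ring
      rw [h4, abs_neg, abs_of_nonneg hg0] at h3
      exact h3.trans (by linarith)
    · push_neg at hc2
      refine ⟨j, hjS, ?_⟩
      have h3 := dist_coe_le (f j) Y (m - ⌊Y - f i₀⌋)
      have h4 : f j - Y - ((m - ⌊Y - f i₀⌋ : ℤ) : ℝ) = L - g i₀ := by
        rw [hm]
        simp only [hg, Int.fract]
        push_cast
        ring
      rw [h4] at h3
      calc dist ((f j : ℝ) : AddCircle (1:ℝ)) (Y : AddCircle (1:ℝ)) ≤ |L - g i₀| := h3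
        _ = L - g i₀ := abs_of_pos (by linarith)
        _ ≤ Lmax / 2 := by linarith

lemma coverSigned (S : Finset ℕ) (hS : S.Nonempty) (θ ε : ℝ) (hε : ε = 1 ∨ ε = -1) (Lmax : ℝ)
    (hstep : ∀ i ∈ S, ∃ j ∈ S, ∃ L : ℝ, 0 < L ∧ L ≤ Lmax ∧
      ∃ m : ℤ, (j:ℝ) * θ = (i:ℝ) * θ + ε * L + m)
    (y : AddCircle (1:ℝ)) :
    ∃ i ∈ S, dist (((i:ℝ) * θ : ℝ) : AddCircle (1:ℝ)) y ≤ Lmax / 2 := by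
  rcases hε with hε | hε
  · refine cover S hS (fun i => (i:ℝ) * θ) Lmax ?_ y
    intro i hi
    obtain ⟨j, hj, L, h1, h2, mm, h3⟩ := hstep i hi
    exact ⟨j, hj, L, h1, h2, mm, by show (j:ℝ)*θ = (i:ℝ)*θ + L + mm; rw [h3, hε]; ring⟩
  · have hstep' : ∀ i ∈ S, ∃ j ∈ S, ∃ L : ℝ, 0 < L ∧ L ≤ Lmax ∧
        ∃ m : ℤ, -((j:ℝ) * θ) = -((i:ℝ) * θ) + L + (m:ℝ) := by
      intro i hi
      obtain ⟨j, hj, L, h1, h2, mm, h3⟩ := hstep i hi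
      exact ⟨j, hj, L, h1, h2, -mm, by rw [hε] at h3; rw [h3]; push_cast; ring⟩
    obtain ⟨i, hi, hd⟩ := cover S hS (fun i => -((i:ℝ) * θ)) Lmax hstep' (-y)
    refine ⟨i, hi, ?_⟩
    rw [coe_neg_circ, dist_neg_neg] at hd
    exact hd

end Stmt7Aux

theorem stmt_7 (θ : ℝ) (hθ : Irrational θ) (k : ℕ) (hk : 1 ≤ k)
    (ha : partQuot θ k = some 1) :
    Fset θ 1 k = Set.univ := by
  obtain ⟨m, rfl⟩ : ∃ m, k = m + 1 := ⟨k - 1, by omega⟩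
  rw [partQuot] at ha
  obtain ⟨hdrec, hnrec, hetarec⟩ := Stmt7Aux.rec_of_pq_one ha
  obtain ⟨Q0, hQ01, hQ0⟩ := Stmt7Aux.dens_nat hθ m
  obtain ⟨Q1, hQ11, hQ1⟩ := Stmt7Aux.dens_nat hθ (m+1)
  obtain ⟨Q2, hQ21, hQ2⟩ := Stmt7Aux.dens_nat hθ (m+2)
  obtain ⟨P0, hP0⟩ := Stmt7Aux.nums_int hθ m
  obtain ⟨P1, hP1⟩ := Stmt7Aux.nums_int hθ (m+1)
  have he0 := Stmt7Aux.eta_pos hθ m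
  have he1 := Stmt7Aux.eta_pos hθ (m+1)
  have he2 := Stmt7Aux.eta_pos hθ (m+2)
  have hid1 := Stmt7Aux.identity hθ (m+1)
  rw [hQ1, hQ2] at hid1
  have hmono : (GenContFract.of θ).dens m ≤ (GenContFract.of θ).dens (m+1) :=
    GenContFract.of_den_mono
  rw [hQ0, hQ1] at hmono
  have hQ01' : Q0 ≤ Q1 := by exact_mod_cast hmono
  have hQsumR : (Q2:ℝ) = (Q1:ℝ) + (Q0:ℝ) := by rw [← hQ0, ← hQ1, ← hQ2]; exact hdrec
  have hQsum : Q2 = Q1 + Q0 := by exact_mod_cast hQsumR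
  set E0 := Stmt7Aux.eta θ m with hE0def
  set E1 := Stmt7Aux.eta θ (m+1) with hE1def
  set E2 := Stmt7Aux.eta θ (m+2) with hE2def
  set e : ℝ := (-1)^m with hedef
  have he : e * e = 1 := by rw [hedef, ← mul_pow]; norm_num
  have hε : e = 1 ∨ e = -1 := by
    rcases Nat.even_or_odd m with h | h
    · left; rw [hedef]; exact h.neg_one_pow
    · right; rw [hedef]; exact h.neg_one_pow
  have hE0 : E0 = e * ((Q0:ℝ)*θ - P0) := by
    rw [hE0def]; simp only [Stmt7Aux.eta]; rw [hQ0, hP0, ← hedef]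
  have hE1 : E1 = -e * ((Q1:ℝ)*θ - P1) := by
    rw [hE1def]; simp only [Stmt7Aux.eta]; rw [hQ1, hP1, pow_succ, ← hedef]; ring
  have hδ0 : (Q0:ℝ)*θ = P0 + e * E0 := by
    rw [hE0]; linear_combination ((P0:ℝ) - (Q0:ℝ)*θ) * he
  have hδ1 : (Q1:ℝ)*θ = P1 - e * E1 := by
    rw [hE1]; linear_combination ((P1:ℝ) - (Q1:ℝ)*θ) * he
  -- key arithmetic facts
  have hQ2pos : (1:ℝ) ≤ (Q2:ℝ) := by exact_mod_cast hQ21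
  have l1 : (Q0:ℝ)*E2 ≤ (Q1:ℝ)*E2 :=
    mul_le_mul_of_nonneg_right (by exact_mod_cast hQ01') he2.le
  have l2 : 0 < (Q2:ℝ)*E1 := mul_pos (lt_of_lt_of_le one_pos hQ2pos) he1
  have hKey : (Q2:ℝ) * E0 = 1 + (Q0:ℝ) * E2 := by
    linear_combination hid1 + (Q2:ℝ) * hetarec + E2 * hQsumR
  ext y
  simp only [Fset, Set.mem_iInter, Set.mem_univ, iff_true, Set.mem_setOf_eq]
  intro n hn
  simp only [qd] at hn
  rw [hQ1] at hn
  rw [show (GenContFract.of θ).dens (m+1+1) = ((Q2:ℕ):ℝ) from hQ2] at hn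
  obtain ⟨hn1, hn2⟩ := hn
  have hn1' : Q1 < n := by exact_mod_cast hn1
  have hn2' : n ≤ Q2 := by exact_mod_cast hn2
  have hnpos : (0:ℝ) < (n:ℝ) := by
    have : 0 < n := by omega
    exact_mod_cast this
  have hrad : (n:ℝ) ^ (-(1:ℝ)) = 1 / (n:ℝ) := by
    rw [Real.rpow_neg_one, one_div]
  -- final target reduction
  have main : ∃ i ∈ Finset.Icc 1 n, dist (((i:ℝ) * θ : ℝ) : AddCircle (1:ℝ)) y < 1 / (n:ℝ) := by
    rcases eq_or_lt_of_le hn2' with hcase | hcase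
    · -- n = Q2 : use all points up to Q2, max gap E0
      have hstepA : ∀ i ∈ Finset.Icc 1 Q2, ∃ j ∈ Finset.Icc 1 Q2, ∃ L : ℝ,
          0 < L ∧ L ≤ E0 ∧ ∃ mm : ℤ, (j:ℝ) * θ = (i:ℝ) * θ + e * L + mm := by
        intro i hi
        rw [Finset.mem_Icc] at hi
        by_cases hile : i ≤ Q1
        · refine ⟨i + Q0, Finset.mem_Icc.mpr ⟨by omega, by omega⟩, E0, he0, le_refl _, P0, ?_⟩
          push_cast
          linear_combination hδ0
        · refine ⟨i - Q1, Finset.mem_Icc.mpr ⟨by omega, by omega⟩, E1, he1,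
            by rw [hetarec]; linarith, -P1, ?_⟩
          have hcast : (((i - Q1 : ℕ)):ℝ) = (i:ℝ) - (Q1:ℝ) := by
            push_cast [Nat.cast_sub (by omega : Q1 ≤ i)]
            ring
          rw [hcast]
          push_cast
          linear_combination -hδ1
      obtain ⟨i, hi, hdist⟩ := Stmt7Aux.coverSigned (Finset.Icc 1 Q2)
        ⟨1, Finset.mem_Icc.mpr ⟨le_refl 1, hQ21⟩⟩ θ e hε E0 hstepA y
      refine ⟨i, by rwa [hcase], ?_⟩
      have h2 : (Q2:ℝ) * E0 < 2 := by linarith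
      have h3 : E0 / 2 < 1 / (n:ℝ) := by
        rw [div_lt_div_iff₀ (by norm_num) hnpos]
        have hnq : (n:ℝ) = (Q2:ℝ) := by rw [hcase]
        have hr : E0 * (n:ℝ) = (Q2:ℝ) * E0 := by rw [hnq]; ring
        linarith
      linarith
    · -- Q1 < n < Q2 : use points up to Q1, max gap E0 + E1
      have hstepB : ∀ i ∈ Finset.Icc 1 Q1, ∃ j ∈ Finset.Icc 1 Q1, ∃ L : ℝ,
          0 < L ∧ L ≤ E0 + E1 ∧ ∃ mm : ℤ, (j:ℝ) * θ = (i:ℝ) * θ + e * L + mm := by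
        intro i hi
        rw [Finset.mem_Icc] at hi
        by_cases hile : i + Q0 ≤ Q1
        · refine ⟨i + Q0, Finset.mem_Icc.mpr ⟨by omega, hile⟩, E0, he0, by linarith, P0, ?_⟩
          push_cast
          linear_combination hδ0
        · refine ⟨i + Q0 - Q1, Finset.mem_Icc.mpr ⟨by omega, by omega⟩, E0 + E1,
            by linarith, le_refl _, P0 - P1, ?_⟩
          have hcast : (((i + Q0 - Q1 : ℕ)):ℝ) = (i:ℝ) + (Q0:ℝ) - (Q1:ℝ) := by
            push_cast [Nat.cast_sub (by omega : Q1 ≤ i + Q0)]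
            ring
          rw [hcast]
          push_cast
          linear_combination hδ0 - hδ1
      obtain ⟨i, hi, hdist⟩ := Stmt7Aux.coverSigned (Finset.Icc 1 Q1)
        ⟨1, Finset.mem_Icc.mpr ⟨le_refl 1, hQ11⟩⟩ θ e hε (E0 + E1) hstepB y
      rw [Finset.mem_Icc] at hi
      refine ⟨i, Finset.mem_Icc.mpr ⟨hi.1, by omega⟩, ?_⟩
      have hnle : (n:ℝ) ≤ (Q2:ℝ) - 1 := by
        have : (n:ℝ) + 1 ≤ (Q2:ℝ) := by exact_mod_cast hcase
        linarith
      have h2 : (n:ℝ) * (E0 + E1) < 2 := by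
        have b1 : (n:ℝ) * (E0 + E1) ≤ ((Q2:ℝ) - 1) * (E0 + E1) :=
          mul_le_mul_of_nonneg_right hnle (by linarith)
        have e1 : (Q2:ℝ) * (E0 + E1) = (Q2:ℝ) * E0 + (Q2:ℝ) * E1 := by ring
        have b2 : (Q2:ℝ) * (E0 + E1) ≤ 2 := by linarith
        have e2 : ((Q2:ℝ) - 1) * (E0 + E1) = (Q2:ℝ) * (E0 + E1) - (E0 + E1) := by ring
        linarith
      have h3 : (E0 + E1) / 2 < 1 / (n:ℝ) := by
        rw [div_lt_div_iff₀ (by norm_num) hnpos]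
        have hr : (E0 + E1) * (n:ℝ) = (n:ℝ) * (E0 + E1) := by ring
        linarith
      linarith
  obtain ⟨i, hi, hdist⟩ := main
  show y ∈ Gset θ 1 n
  rw [Gset]
  refine Set.mem_iUnion₂.mpr ⟨i, hi, ?_⟩
  rw [Metric.mem_ball, dist_comm, hrad]
  exact hdist
end

section
/- Let θ = (√5 − 1)/2 be the golden-ratio conjugate, all of whose continued fraction partial quotients equal 1. Then for τ = 1, the uniform approximation set U_1[θ] = { y ∈ T : for all large Q there exists 1 ≤ n ≤ Q with ‖nθ − y‖ < 1/Q } equals all of T. -/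
open Filter

/-! ### Auxiliary lemmas about the golden-ratio conjugate -/

noncomputable def th : ℝ := (Real.sqrt 5 - 1) / 2

lemma th_pos : 0 < th := by
  have h : (2:ℝ) < Real.sqrt 5 := by
    have := Real.sq_sqrt (by norm_num : (5:ℝ) ≥ 0)
    nlinarith [Real.sqrt_nonneg 5]
  unfold th; linarith

lemma th_lt_one : th < 1 := by
  have h : Real.sqrt 5 < 3 := by
    have := Real.sq_sqrt (by norm_num : (5:ℝ) ≥ 0)
    nlinarith [Real.sqrt_nonneg 5]
  unfold th; linarith

lemma th_sq : th ^ 2 = 1 - th := by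
  have := Real.sq_sqrt (by norm_num : (5:ℝ) ≥ 0)
  unfold th; nlinarith [Real.sqrt_nonneg 5]

lemma fib_th (n : ℕ) : (Nat.fib (n+1) : ℝ) * th - Nat.fib n = (-1)^n * th^(n+1) := by
  induction n using Nat.twoStepInduction with
  | zero => simp
  | one => simp [Nat.fib]; linear_combination th_sq
  | more n h1 h2 =>
      have h2' : (Nat.fib (n+2) : ℝ) * th - Nat.fib (n+1) = (-1)^(n+1) * th^(n+2) := h2
      have e : (Nat.fib (n+2+1) : ℝ) = (Nat.fib (n+1) : ℝ) + Nat.fib (n+2) := by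
        rw [show n+2+1 = n+1+2 by ring, Nat.fib_add_two]; push_cast; ring
      have e2 : (Nat.fib (n+2) : ℝ) = (Nat.fib n : ℝ) + Nat.fib (n+1) := by
        rw [Nat.fib_add_two]; push_cast; ring
      rw [e, e2]
      linear_combination h1 + h2' - th * e2 - ((-1:ℝ)^n * th^(n+1)) * th_sq

lemma fib_growth (m : ℕ) : (Nat.fib (m+3) : ℝ) * th ^ m ≤ 2 := by
  induction m using Nat.twoStepInduction with
  | zero => norm_num [Nat.fib]
  | one =>
      norm_num [Nat.fib]
      nlinarith [th_sq, th_lt_one, th_pos]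
  | more m h1 h2 =>
      have e : (Nat.fib (m+2+3) : ℝ) = (Nat.fib (m+3) : ℝ) + Nat.fib (m+1+3) := by
        rw [show m+2+3 = m+3+2 by ring, Nat.fib_add_two, show m+3+1 = m+1+3 by ring]
        push_cast; ring
      rw [e]
      have hp : (0:ℝ) ≤ th ^ m := le_of_lt (pow_pos th_pos m)
      have k1 : (Nat.fib (m+3) : ℝ) * th ^ (m+2) ≤ 2 * th^2 := by
        calc (Nat.fib (m+3) : ℝ) * th ^ (m+2) = ((Nat.fib (m+3) : ℝ) * th ^ m) * th^2 := by ring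
        _ ≤ 2 * th^2 := by nlinarith [sq_nonneg th, th_pos]
      have k2 : (Nat.fib (m+1+3) : ℝ) * th ^ (m+2) ≤ 2 * th := by
        calc (Nat.fib (m+1+3) : ℝ) * th ^ (m+2) = ((Nat.fib (m+1+3) : ℝ) * th ^ (m+1)) * th := by ring
        _ ≤ 2 * th := by nlinarith [th_pos]
      nlinarith [th_sq]

lemma fib_lb (m : ℕ) : m + 1 ≤ Nat.fib (m+2) := by
  induction m with
  | zero => simp
  | succ m ih =>
      have h1 : 1 ≤ Nat.fib (m+3) := Nat.fib_pos.mpr (by omega)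
      have he : Nat.fib (m+1+2) = Nat.fib (m+1) + Nat.fib (m+2) := Nat.fib_add_two
      have h2 : 1 ≤ Nat.fib (m+1) := Nat.fib_pos.mpr (by omega)
      omega

lemma key (m : ℕ) (y : ℝ) : ∃ n : ℕ, ∃ z : ℤ, 1 ≤ n ∧ n ≤ Nat.fib (m+2) ∧
    |(n : ℝ) * th - y - z| ≤ th ^ m / 2 := by
  induction m generalizing y with
  | zero =>
      exact ⟨1, round (th - y), le_refl 1, by norm_num [Nat.fib],
        by push_cast; simpa [sub_sub] using abs_sub_round (th - y)⟩
  | succ m ih =>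
      obtain ⟨n, z, hn1, hn2, he⟩ := ih y
      set e : ℝ := (n : ℝ) * th - y - z with hedef
      set u : ℝ := th ^ (m+1) with hudef
      have hu : 0 < u := pow_pos th_pos _
      have hth1 : th < 1 := th_lt_one
      have hth0 : 0 < th := th_pos
      have hthu : th * u ≤ u := by
        nlinarith [mul_nonneg (by linarith : (0:ℝ) ≤ 1 - th) hu.le]
      have hthu0 : 0 ≤ th * u := mul_nonneg hth0.le hu.le
      have hsplit : th ^ m = u + th * u := by
        have h2 : th ^ m * (th^2 + th) = th ^ m * 1 := by rw [th_sq]; ring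
        calc th ^ m = th ^ m * (th^2 + th) := by linarith [h2]
        _ = th ^ (m+1) + th * th ^ (m+1) := by ring
      have hebound : |e| ≤ (u + th * u) / 2 := by rw [← hsplit]; exact he
      by_cases hsmall : |e| ≤ u / 2
      · exact ⟨n, z, hn1, le_trans hn2 Nat.fib_le_fib_succ, by rw [← hedef]; exact hsmall⟩
      push_neg at hsmall
      set s : ℝ := (-1)^m with hsdef
      have hs : s = 1 ∨ s = -1 := by
        rcases Nat.even_or_odd m with h | h
        · left; rw [hsdef]; exact h.neg_one_pow
        · right; rw [hsdef]; exact h.neg_one_pow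
      have habs_s : ∀ x : ℝ, |s * x| = |x| := by
        intro x; rcases hs with h | h <;> simp [h, abs_mul]
      have id1 : (Nat.fib (m+1) : ℝ) * th = Nat.fib m + s * u := by
        have h := fib_th m; rw [← hsdef, ← hudef] at h; linarith [h]
      have id2 : (Nat.fib (m+2) : ℝ) * th = Nat.fib (m+1) - s * (th * u) := by
        have h := fib_th (m+1)
        have hns : ((-1:ℝ))^(m+1) = -s := by rw [hsdef]; ring
        have hp : th ^ (m+1+1) = th * u := by rw [hudef]; ring
        rw [hns, hp] at h; linarith [h]
      have hfib3 : Nat.fib (m+1+2) = Nat.fib (m+1) + Nat.fib (m+2) := by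
        rw [Nat.fib_add_two]
      have hsb : |s * e| ≤ (u + th * u) / 2 := by rw [habs_s]; exact hebound
      obtain ⟨hse_lb, hse_ub⟩ := abs_le.mp hsb
      have hcase : u / 2 < s * e ∨ u / 2 < -(s * e) := by
        have : u / 2 < |s * e| := by rw [habs_s]; exact hsmall
        exact lt_abs.mp this
      rcases hcase with hpos | hneg
      · -- s*e > u/2 : subtract fib(m+1) if possible, else add fib(m+2)
        by_cases hbig : Nat.fib (m+1) < n
        · refine ⟨n - Nat.fib (m+1), z - Nat.fib m, ?_, ?_, ?_⟩
          · omega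
          · omega
          · have hcast : ((n - Nat.fib (m+1) : ℕ) : ℝ) = (n : ℝ) - Nat.fib (m+1) := by
              rw [Nat.cast_sub (le_of_lt hbig)]
            rw [hcast]
            push_cast
            have hval : ((n : ℝ) - Nat.fib (m+1)) * th - y - ((z : ℝ) - Nat.fib m) = e - s * u := by
              rw [hedef]; linarith [id1]
            rw [hval]
            have h1 : s * (e - s * u) = s * e - u := by
              rcases hs with h | h <;> rw [h] <;> ring
            have h2 : |s * (e - s * u)| ≤ u / 2 := by
              rw [h1, abs_le]; constructor <;> linarith
            rw [habs_s] at h2; exact h2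
        · push_neg at hbig
          refine ⟨n + Nat.fib (m+2), z + Nat.fib (m+1), by omega, by omega, ?_⟩
          push_cast
          have hval : ((n : ℝ) + Nat.fib (m+2)) * th - y - ((z : ℝ) + Nat.fib (m+1)) = e - s * (th * u) := by
            rw [hedef]; linarith [id2]
          rw [hval]
          have h1 : s * (e - s * (th * u)) = s * e - th * u := by
            rcases hs with h | h <;> rw [h] <;> ring
          have h2 : |s * (e - s * (th * u))| ≤ u / 2 := by
            rw [h1, abs_le]; constructor <;> linarith
          rw [habs_s] at h2; exact h2
      · -- s*e < -u/2 : add fib(m+1)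
        refine ⟨n + Nat.fib (m+1), z + Nat.fib m, by omega, by omega, ?_⟩
        push_cast
        have hval : ((n : ℝ) + Nat.fib (m+1)) * th - y - ((z : ℝ) + Nat.fib m) = e + s * u := by
          rw [hedef]; linarith [id1]
        rw [hval]
        have h1 : s * (e + s * u) = s * e + u := by
          rcases hs with h | h <;> rw [h] <;> ring
        have h2 : |s * (e + s * u)| ≤ u / 2 := by
          rw [h1, abs_le]; constructor <;> linarith
        rw [habs_s] at h2; exact h2

theorem stmt_19 : Uset ((Real.sqrt 5 - 1) / 2) 1 = Set.univ := by
  have hth : (Real.sqrt 5 - 1) / 2 = th := rfl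
  rw [hth]
  ext y
  simp only [Set.mem_univ, iff_true, Uset, Set.mem_setOf_eq]
  induction y using QuotientAddGroup.induction_on with
  | H x =>
  rw [eventually_atTop]
  refine ⟨1, fun Q hQ => ?_⟩
  -- choose m with fib(m+2) ≤ Q < fib(m+3)
  have hex : ∃ m, Q < Nat.fib (m+3) := by
    have h := fib_lb (Q+1)
    rw [show Q+1+2 = Q+3 from by omega] at h
    exact ⟨Q, by omega⟩
  have hm1 : Q < Nat.fib (Nat.find hex + 3) := Nat.find_spec hex
  set m := Nat.find hex with hmdef
  have hm2 : Nat.fib (m+2) ≤ Q := by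
    rcases Nat.eq_zero_or_pos m with h | h
    · rw [h]; simpa using hQ
    · have h2 := Nat.find_min hex (show m - 1 < m by omega)
      rw [show m-1+3 = m+2 from by omega] at h2
      omega
  obtain ⟨n, z, hn1, hn2, he⟩ := key m x
  refine ⟨n, hn1, le_trans hn2 hm2, ?_⟩
  have hQ0 : (0:ℝ) < Q := by exact_mod_cast hQ
  have hrpow : (Q : ℝ) ^ (-(1:ℝ)) = ((Q:ℝ))⁻¹ := Real.rpow_neg_one _
  rw [hrpow]
  -- dist in the circle is at most |nθ - x - z|
  have hdist : dist (((n : ℝ) * th : ℝ) : AddCircle (1 : ℝ)) ((x : ℝ) : AddCircle (1:ℝ))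
      ≤ |(n : ℝ) * th - x - z| := by
    rw [dist_eq_norm]
    have hcoe : (((n : ℝ) * th : ℝ) : AddCircle (1 : ℝ)) - ((x : ℝ) : AddCircle (1:ℝ))
        = (((n : ℝ) * th - x : ℝ) : AddCircle (1 : ℝ)) :=
      (AddCircle.coe_sub (p := (1:ℝ)) ((n : ℝ) * th) x).symm
    rw [hcoe, AddCircle.norm_eq]
    simp only [inv_one, one_mul, mul_one]
    exact round_le ((n : ℝ) * th - x) z
  refine lt_of_le_of_lt (le_trans hdist he) ?_
  -- θ^m / 2 < 1/Q
  have hQle : (Q : ℝ) ≤ (Nat.fib (m+3) : ℝ) - 1 := by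
    have : (Q : ℝ) + 1 ≤ (Nat.fib (m+3) : ℝ) := by exact_mod_cast hm1
    linarith
  have hpm : (0:ℝ) < th ^ m := pow_pos th_pos m
  have hQth : (Q : ℝ) * th ^ m < 2 := by
    nlinarith [fib_growth m]
  rw [inv_eq_one_div, lt_div_iff₀ hQ0]
  nlinarith [hQth]
end
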